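/- Assume that ‖Z_t‖ ≤ 2√‖X‖ and ‖Δ_t‖ ≤ ‖X‖. Then the imbalance matrix satisfies ‖Z̃_{t+1}ᵀZ_{t+1}‖ ≤ ‖Z̃_tᵀZ_t‖ + 400μ²‖X‖³. -/

import Mathlib

/-!
Write `S := ℬ*ℬ(Z_tZ_tᵀ − Z̃_tZ̃_tᵀ − sym(X))`; it is symmetric, and the two updates are
`Z_{t+1} = Z_t − μ S Z_t` and `Z̃_{t+1} = Z̃_t + μ S Z̃_t`. The first-order terms therefore cancel in
`Z̃_{t+1}ᵀ Z_{t+1} = Z̃_tᵀ Z_t − μ² Z̃_tᵀ S² Z_t`. Since `Z̃_tᵀ Z̃_t = Z_tᵀ Z_t`, the norms of `Z̃_t`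
and `Z_t` agree, and as `S = (Z_tZ_tᵀ − Z̃_tZ̃_tᵀ − sym(X)) − Δ_t` with `‖sym(X)‖ ≤ ‖X‖`, we get
`‖S‖ ≤ 2‖Z_t‖² + 2‖X‖ ≤ 10‖X‖`, so the correction is at most `μ² ‖Z_t‖² ‖S‖² ≤ 400 μ² ‖X‖³`.
-/

open Matrix MeasureTheory ProbabilityTheory

noncomputable section

namespace AsymMatrixSensing

/-- Euclidean norm of a real vector. -/
def euclNorm {ι : Type*} [Fintype ι] (v : ι → ℝ) : ℝ :=
  Real.sqrt (∑ i, v i ^ 2)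

/-- Spectral norm of a real matrix. -/
def specNorm {ι₁ ι₂ : Type*} [Fintype ι₁] [Fintype ι₂] (M : Matrix ι₁ ι₂ ℝ) : ℝ :=
  sSup {c : ℝ | ∃ x : ι₂ → ℝ, euclNorm x ≤ 1 ∧ c = euclNorm (M.mulVec x)}

/-- Frobenius norm of a real matrix. -/
def frobNorm {ι₁ ι₂ : Type*} [Fintype ι₁] [Fintype ι₂] (M : Matrix ι₁ ι₂ ℝ) : ℝ :=
  Real.sqrt (∑ i, ∑ j, M i j ^ 2)

/-- Nuclear norm of a real matrix (characterized by duality with the spectral norm). -/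
def nucNorm {ι₁ ι₂ : Type*} [Fintype ι₁] [Fintype ι₂] (M : Matrix ι₁ ι₂ ℝ) : ℝ :=
  sSup {c : ℝ | ∃ B : Matrix ι₁ ι₂ ℝ, specNorm B ≤ 1 ∧ c = ∑ i, ∑ j, M i j * B i j}

/-- Smallest singular value `σ_{min(a,b)}(M)` of a matrix. -/
def sigmaMin {ι₁ ι₂ : Type*} [Fintype ι₁] [Fintype ι₂] (M : Matrix ι₁ ι₂ ℝ) : ℝ :=
  max (sInf {c : ℝ | ∃ x : ι₂ → ℝ, euclNorm x = 1 ∧ c = euclNorm (M.mulVec x)})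
      (sInf {c : ℝ | ∃ y : ι₁ → ℝ, euclNorm y = 1 ∧ c = euclNorm (Mᵀ.mulVec y)})

/-- Smallest nonzero singular value `σ_rank(M)`: the minimum of `‖Mx‖` over unit
vectors `x` orthogonal to the kernel of `M`. -/
def sigmaPos {ι₁ ι₂ : Type*} [Fintype ι₁] [Fintype ι₂] (M : Matrix ι₁ ι₂ ℝ) : ℝ :=
  sInf {c : ℝ | ∃ x : ι₂ → ℝ, euclNorm x = 1 ∧
    (∀ y : ι₂ → ℝ, M.mulVec y = 0 → x ⬝ᵥ y = 0) ∧ c = euclNorm (M.mulVec x)}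

/-- Condition number `κ = ‖M‖ / σ_min(M)`. -/
def condNum {ι₁ ι₂ : Type*} [Fintype ι₁] [Fintype ι₂] (M : Matrix ι₁ ι₂ ℝ) : ℝ :=
  specNorm M / sigmaPos M

/-- Trace inner product `⟨M, N⟩ = trace(Mᵀ N)`. -/
def minner {ι₁ ι₂ : Type*} [Fintype ι₁] [Fintype ι₂] (M N : Matrix ι₁ ι₂ ℝ) : ℝ :=
  ∑ i, ∑ j, M i j * N i j

/-- `P` is a matrix with orthonormal columns spanning the column space of `M`. -/
def IsOrthCol {ι κ₁ κ₂ : Type*} [Fintype ι] [Fintype κ₁] [Fintype κ₂] [DecidableEq κ₂]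
    (P : Matrix ι κ₂ ℝ) (M : Matrix ι κ₁ ℝ) : Prop :=
  Pᵀ * P = 1 ∧ (∃ C : Matrix κ₁ κ₂ ℝ, P = M * C) ∧ P * Pᵀ * M = M

/-- `L` has orthonormal columns spanning the subspace spanned by eigenvectors of the
symmetric matrix `F` corresponding to its `r` largest eigenvalues. -/
def IsTopEigenspace {ι : Type*} [Fintype ι] [DecidableEq ι] {r : ℕ} (F : Matrix ι ι ℝ)
    (L : Matrix ι (Fin r) ℝ) : Prop :=
  Lᵀ * L = 1 ∧ ∃ d : Fin r → ℝ, F * L = L * Matrix.diagonal d ∧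
    ∀ (v : ι → ℝ) (lam : ℝ), v ≠ 0 → F.mulVec v = lam • v →
      Lᵀ.mulVec v = 0 → ∀ i, lam ≤ d i

variable {n₁ n₂ m k r : ℕ}

/-- The measurement operator `𝒜`, given by `[𝒜(Z)]ᵢ = ⟨Aᵢ, Z⟩`. -/
def calA (A : Fin m → Matrix (Fin n₁) (Fin n₂) ℝ) (Z : Matrix (Fin n₁) (Fin n₂) ℝ) :
    Fin m → ℝ := fun i => minner (A i) Z

/-- The restricted isometry property of order `s` with constant `δ`. -/
def HasRIP (A : Fin m → Matrix (Fin n₁) (Fin n₂) ℝ) (s : ℕ) (δ : ℝ) : Prop :=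
  ∀ M : Matrix (Fin n₁) (Fin n₂) ℝ, M.rank ≤ s →
    (1 - δ) * frobNorm M ^ 2 ≤ ∑ i, calA A M i ^ 2 ∧
      ∑ i, calA A M i ^ 2 ≤ (1 + δ) * frobNorm M ^ 2

/-- `𝒜*𝒜`. -/
def AstarA (A : Fin m → Matrix (Fin n₁) (Fin n₂) ℝ) (Z : Matrix (Fin n₁) (Fin n₂) ℝ) :
    Matrix (Fin n₁) (Fin n₂) ℝ := ∑ i, minner (A i) Z • A i

/-- The symmetrization `sym(X) = [[0, X], [Xᵀ, 0]]`. -/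
def symMat (X : Matrix (Fin n₁) (Fin n₂) ℝ) :
    Matrix (Fin n₁ ⊕ Fin n₂) (Fin n₁ ⊕ Fin n₂) ℝ := Matrix.fromBlocks 0 X Xᵀ 0

/-- The symmetrized measurement matrices `Bᵢ = (1/√2)[[0, Aᵢ], [Aᵢᵀ, 0]]`. -/
def Bmat (A : Fin m → Matrix (Fin n₁) (Fin n₂) ℝ) (i : Fin m) :
    Matrix (Fin n₁ ⊕ Fin n₂) (Fin n₁ ⊕ Fin n₂) ℝ :=
  (Real.sqrt 2)⁻¹ • Matrix.fromBlocks 0 (A i) (A i)ᵀ 0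

/-- `ℬ*ℬ`. -/
def BstarB (A : Fin m → Matrix (Fin n₁) (Fin n₂) ℝ)
    (S : Matrix (Fin n₁ ⊕ Fin n₂) (Fin n₁ ⊕ Fin n₂) ℝ) :
    Matrix (Fin n₁ ⊕ Fin n₂) (Fin n₁ ⊕ Fin n₂) ℝ :=
  ∑ i, minner (Bmat A i) S • Bmat A i

/-- The factorized gradient descent iterates `(V_t, W_t)`. -/
def iter (A : Fin m → Matrix (Fin n₁) (Fin n₂) ℝ) (X : Matrix (Fin n₁) (Fin n₂) ℝ)
    (μ : ℝ) (V₀ : Matrix (Fin n₁) (Fin k) ℝ) (W₀ : Matrix (Fin n₂) (Fin k) ℝ) :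
    ℕ → Matrix (Fin n₁) (Fin k) ℝ × Matrix (Fin n₂) (Fin k) ℝ
  | 0 => (V₀, W₀)
  | t + 1 =>
    let p := iter A X μ V₀ W₀ t
    let G := AstarA A (p.1 * p.2ᵀ - X)
    (p.1 - μ • (G * p.2), p.2 - μ • (Gᵀ * p.1))

/-- The vertical stacking `(1/√2)[V; W]`. -/
def Zstack {κ : ℕ} (V : Matrix (Fin n₁) (Fin κ) ℝ) (W : Matrix (Fin n₂) (Fin κ) ℝ) :
    Matrix (Fin n₁ ⊕ Fin n₂) (Fin κ) ℝ :=
  (Real.sqrt 2)⁻¹ • Matrix.fromRows V W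

/-- `Z_t = (1/√2)[V_t; W_t]`. -/
def Zit (A : Fin m → Matrix (Fin n₁) (Fin n₂) ℝ) (X : Matrix (Fin n₁) (Fin n₂) ℝ)
    (μ : ℝ) (V₀ : Matrix (Fin n₁) (Fin k) ℝ) (W₀ : Matrix (Fin n₂) (Fin k) ℝ) (t : ℕ) :
    Matrix (Fin n₁ ⊕ Fin n₂) (Fin k) ℝ :=
  Zstack (iter A X μ V₀ W₀ t).1 (iter A X μ V₀ W₀ t).2

/-- `Z̃_t = (1/√2)[V_t; −W_t]`. -/
def Ztil (A : Fin m → Matrix (Fin n₁) (Fin n₂) ℝ) (X : Matrix (Fin n₁) (Fin n₂) ℝ)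
    (μ : ℝ) (V₀ : Matrix (Fin n₁) (Fin k) ℝ) (W₀ : Matrix (Fin n₂) (Fin k) ℝ) (t : ℕ) :
    Matrix (Fin n₁ ⊕ Fin n₂) (Fin k) ℝ :=
  Zstack (iter A X μ V₀ W₀ t).1 (-(iter A X μ V₀ W₀ t).2)

/-- `Δ_t = (Id − ℬ*ℬ)(Z_tZ_tᵀ − Z̃_tZ̃_tᵀ − sym(X))`. -/
def Δit (A : Fin m → Matrix (Fin n₁) (Fin n₂) ℝ) (X : Matrix (Fin n₁) (Fin n₂) ℝ)
    (μ : ℝ) (V₀ : Matrix (Fin n₁) (Fin k) ℝ) (W₀ : Matrix (Fin n₂) (Fin k) ℝ) (t : ℕ) :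
    Matrix (Fin n₁ ⊕ Fin n₂) (Fin n₁ ⊕ Fin n₂) ℝ :=
  let D := Zit A X μ V₀ W₀ t * (Zit A X μ V₀ W₀ t)ᵀ
    - Ztil A X μ V₀ W₀ t * (Ztil A X μ V₀ W₀ t)ᵀ - symMat X
  D - BstarB A D

/-- The block diagonal matrix `diag(Id_{n₁}, −Id_{n₂})`. -/
def flipSign (n₁ n₂ : ℕ) : Matrix (Fin n₁ ⊕ Fin n₂) (Fin n₁ ⊕ Fin n₂) ℝ :=
  Matrix.fromBlocks 1 0 0 (-1)

/-- Product Gaussian measure modelling the random initialization pair `(V, W)`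
with i.i.d. standard Gaussian entries. -/
def gaussPair (n₁ n₂ k : ℕ) :
    Measure ((Fin n₁ → Fin k → ℝ) × (Fin n₂ → Fin k → ℝ)) :=
  (Measure.pi fun _ : Fin n₁ => Measure.pi fun _ : Fin k => gaussianReal 0 1).prod
    (Measure.pi fun _ : Fin n₂ => Measure.pi fun _ : Fin k => gaussianReal 0 1)

open scoped Matrix.Norms.L2Operator

section SpectralNorm

variable {ι₁ ι₂ : Type*} [Fintype ι₁] [Fintype ι₂]

lemma euclNorm_eq_norm (v : ι₁ → ℝ) : euclNorm v = ‖WithLp.toLp 2 v‖ := by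
  simp [euclNorm, EuclideanSpace.norm_eq]

lemma euclNorm_nonneg (v : ι₁ → ℝ) : 0 ≤ euclNorm v := Real.sqrt_nonneg _

lemma euclNorm_sumElim_sq (u : ι₁ → ℝ) (v : ι₂ → ℝ) :
    euclNorm (Sum.elim u v) ^ 2 = euclNorm u ^ 2 + euclNorm v ^ 2 := by
  simp only [euclNorm]
  rw [Real.sq_sqrt (by positivity), Real.sq_sqrt (by positivity), Real.sq_sqrt (by positivity),
    Fintype.sum_sum_type]
  rfl

variable [DecidableEq ι₂]

lemma specNorm_eq_norm (M : Matrix ι₁ ι₂ ℝ) : specNorm M = ‖M‖ := by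
  rw [Matrix.l2_opNorm_def, ← ContinuousLinearMap.sSup_unitClosedBall_eq_norm]
  refine congrArg sSup ?_
  ext c
  simp only [Set.mem_ofPred_eq, Set.mem_image, Metric.mem_closedBall, dist_zero_right,
    euclNorm_eq_norm]
  constructor
  · rintro ⟨x, hx, rfl⟩
    exact ⟨WithLp.toLp 2 x, hx, rfl⟩
  · rintro ⟨x, hx, rfl⟩
    exact ⟨x.ofLp, hx, rfl⟩

lemma euclNorm_mulVec_le (M : Matrix ι₁ ι₂ ℝ) (x : ι₂ → ℝ) :
    euclNorm (M *ᵥ x) ≤ ‖M‖ * euclNorm x := by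
  simpa [euclNorm_eq_norm] using Matrix.l2_opNorm_mulVec M (WithLp.toLp 2 x)

lemma norm_le_of_euclNorm_mulVec_le {M : Matrix ι₁ ι₂ ℝ} {a : ℝ} (ha : 0 ≤ a)
    (h : ∀ x, euclNorm (M *ᵥ x) ≤ a * euclNorm x) : ‖M‖ ≤ a :=
  ContinuousLinearMap.opNorm_le_bound _ ha fun x => by
    simpa [euclNorm_eq_norm, Matrix.toLpLin_apply] using h x.ofLp

lemma norm_eq_of_transpose_mul_self_eq {M N : Matrix ι₁ ι₂ ℝ} (h : Mᵀ * M = Nᵀ * N) :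
    ‖M‖ = ‖N‖ := by
  have hM := Matrix.l2_opNorm_conjTranspose_mul_self M
  have hN := Matrix.l2_opNorm_conjTranspose_mul_self N
  simp only [Matrix.conjTranspose_eq_transpose_of_trivial, h] at hM hN
  exact (mul_self_inj (norm_nonneg M) (norm_nonneg N)).1 (hM.symm.trans hN)

variable [DecidableEq ι₁]

lemma norm_fromBlocks_zero_zero_le (B : Matrix ι₁ ι₂ ℝ) (C : Matrix ι₂ ι₁ ℝ) :
    ‖Matrix.fromBlocks 0 B C 0‖ ≤ max ‖B‖ ‖C‖ := by
  set a := max ‖B‖ ‖C‖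
  have ha : 0 ≤ a := (norm_nonneg B).trans (le_max_left _ _)
  refine norm_le_of_euclNorm_mulVec_le ha fun x => ?_
  have hx : euclNorm x ^ 2 = euclNorm (x ∘ Sum.inl) ^ 2 + euclNorm (x ∘ Sum.inr) ^ 2 := by
    rw [← euclNorm_sumElim_sq, Sum.elim_comp_inl_inr]
  have hB : euclNorm (B *ᵥ (x ∘ Sum.inr)) ≤ a * euclNorm (x ∘ Sum.inr) :=
    (euclNorm_mulVec_le B _).trans (by gcongr; exacts [euclNorm_nonneg _, le_max_left _ _])
  have hC : euclNorm (C *ᵥ (x ∘ Sum.inl)) ≤ a * euclNorm (x ∘ Sum.inl) :=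
    (euclNorm_mulVec_le C _).trans (by gcongr; exacts [euclNorm_nonneg _, le_max_right _ _])
  rw [Matrix.fromBlocks_mulVec, ← sq_le_sq₀ (euclNorm_nonneg _) (mul_nonneg ha (euclNorm_nonneg x))]
  simp only [Matrix.zero_mulVec, zero_add, add_zero]
  calc euclNorm (Sum.elim (B *ᵥ (x ∘ Sum.inr)) (C *ᵥ (x ∘ Sum.inl))) ^ 2
      = euclNorm (B *ᵥ (x ∘ Sum.inr)) ^ 2 + euclNorm (C *ᵥ (x ∘ Sum.inl)) ^ 2 :=
        euclNorm_sumElim_sq _ _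
    _ ≤ (a * euclNorm (x ∘ Sum.inr)) ^ 2 + (a * euclNorm (x ∘ Sum.inl)) ^ 2 := by
        gcongr <;> exact euclNorm_nonneg _
    _ = (a * euclNorm x) ^ 2 := by rw [mul_pow a (euclNorm x), hx]; ring

lemma norm_transpose (M : Matrix ι₁ ι₂ ℝ) : ‖Mᵀ‖ = ‖M‖ := by
  simpa using Matrix.l2_opNorm_conjTranspose M

lemma norm_mul_transpose_self (M : Matrix ι₁ ι₂ ℝ) : ‖M * Mᵀ‖ = ‖M‖ ^ 2 := by
  simpa [norm_transpose, sq] using Matrix.l2_opNorm_conjTranspose_mul_self Mᵀ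

lemma norm_transpose_mul_mul_mul_le {κ : Type*} [Fintype κ] [DecidableEq κ]
    (N M : Matrix ι₁ κ ℝ) (S : Matrix ι₁ ι₁ ℝ) :
    ‖Nᵀ * S * S * M‖ ≤ ‖N‖ * ‖M‖ * ‖S‖ ^ 2 :=
  calc ‖Nᵀ * S * S * M‖ ≤ ‖Nᵀ‖ * ‖S‖ * ‖S‖ * ‖M‖ :=
        (Matrix.l2_opNorm_mul _ _).trans <| by
          gcongr; exact (Matrix.l2_opNorm_mul _ _).trans (by gcongr; exact Matrix.l2_opNorm_mul _ _)
    _ = ‖N‖ * ‖M‖ * ‖S‖ ^ 2 := by rw [norm_transpose]; ring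

end SpectralNorm

lemma transpose_mul_eq_of_opposite_steps {R ι κ : Type*} [CommRing R] [Fintype ι]
    {S : Matrix ι ι R} (hS : S.IsSymm) (Z Z' : Matrix ι κ R) (c : R) :
    (Z' + c • (S * Z'))ᵀ * (Z - c • (S * Z)) = Z'ᵀ * Z - c ^ 2 • (Z'ᵀ * S * S * Z) := by
  rw [Matrix.transpose_add, Matrix.transpose_smul, Matrix.transpose_mul, hS.eq]
  simp only [Matrix.add_mul, Matrix.mul_sub, Matrix.smul_mul, Matrix.mul_smul,
    Matrix.mul_assoc]
  module

section TraceInner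

variable {ι₁ ι₂ κ₁ κ₂ : Type*} [Fintype ι₁] [Fintype ι₂] [Fintype κ₁] [Fintype κ₂]

lemma minner_smul_left (c : ℝ) (M N : Matrix ι₁ ι₂ ℝ) : minner (c • M) N = c * minner M N := by
  simp [minner, Finset.mul_sum, mul_assoc]

lemma minner_zero_left (N : Matrix ι₁ ι₂ ℝ) : minner 0 N = 0 := by
  simp [minner]

lemma minner_transpose (M N : Matrix ι₁ ι₂ ℝ) : minner Mᵀ Nᵀ = minner M N :=
  Finset.sum_comm

lemma minner_fromBlocks (A A' : Matrix ι₁ κ₁ ℝ) (B B' : Matrix ι₁ κ₂ ℝ)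
    (C C' : Matrix ι₂ κ₁ ℝ) (D D' : Matrix ι₂ κ₂ ℝ) :
    minner (Matrix.fromBlocks A B C D) (Matrix.fromBlocks A' B' C' D')
      = minner A A' + minner B B' + minner C C' + minner D D' := by
  simp only [minner, Fintype.sum_sum_type, Matrix.fromBlocks_apply₁₁, Matrix.fromBlocks_apply₁₂,
    Matrix.fromBlocks_apply₂₁, Matrix.fromBlocks_apply₂₂, Finset.sum_add_distrib]
  ring

end TraceInner

lemma symMat_sub (S T : Matrix (Fin n₁) (Fin n₂) ℝ) :
    symMat (S - T) = symMat S - symMat T := by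
  ext (i | i) (j | j) <;> simp [symMat]

lemma norm_symMat_le (S : Matrix (Fin n₁) (Fin n₂) ℝ) : ‖symMat S‖ ≤ ‖S‖ := by
  simpa [symMat, norm_transpose] using norm_fromBlocks_zero_zero_le S Sᵀ

lemma symMat_mul_Zstack (G : Matrix (Fin n₁) (Fin n₂) ℝ) (V : Matrix (Fin n₁) (Fin k) ℝ)
    (W : Matrix (Fin n₂) (Fin k) ℝ) :
    symMat G * Zstack V W = Zstack (G * W) (Gᵀ * V) := by
  simp [symMat, Zstack, Matrix.fromBlocks_mul_fromRows]

lemma Zstack_mul_transpose_sub_neg (V : Matrix (Fin n₁) (Fin k) ℝ)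
    (W : Matrix (Fin n₂) (Fin k) ℝ) :
    Zstack V W * (Zstack V W)ᵀ - Zstack V (-W) * (Zstack V (-W))ᵀ = symMat (V * Wᵀ) := by
  simp only [Zstack, Matrix.transpose_smul, Matrix.smul_mul, Matrix.mul_smul, smul_smul,
    Matrix.transpose_fromRows, Matrix.fromRows_mul_fromCols]
  rw [← mul_inv, Real.mul_self_sqrt zero_le_two]
  ext (i | i) (j | j) <;> simp [symMat, Matrix.neg_mul, Matrix.mul_neg] <;> ring

lemma Zstack_neg_transpose_mul_self (V : Matrix (Fin n₁) (Fin k) ℝ)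
    (W : Matrix (Fin n₂) (Fin k) ℝ) :
    (Zstack V (-W))ᵀ * Zstack V (-W) = (Zstack V W)ᵀ * Zstack V W := by
  simp [Zstack, Matrix.transpose_fromRows, Matrix.fromCols_mul_fromRows]

lemma Bmat_isSymm (A : Fin m → Matrix (Fin n₁) (Fin n₂) ℝ) (i : Fin m) : (Bmat A i).IsSymm := by
  simp [Matrix.IsSymm, Bmat, Matrix.fromBlocks_transpose]

lemma BstarB_isSymm (A : Fin m → Matrix (Fin n₁) (Fin n₂) ℝ)
    (S : Matrix (Fin n₁ ⊕ Fin n₂) (Fin n₁ ⊕ Fin n₂) ℝ) : (BstarB A S).IsSymm := by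
  simp [Matrix.IsSymm, BstarB, Matrix.transpose_sum, (Bmat_isSymm A _).eq]

lemma BstarB_symMat (A : Fin m → Matrix (Fin n₁) (Fin n₂) ℝ) (T : Matrix (Fin n₁) (Fin n₂) ℝ) :
    BstarB A (symMat T) = symMat (AstarA A T) := by
  have hterm (i : Fin m) : minner (Bmat A i) (symMat T) • Bmat A i
      = minner (A i) T • Matrix.fromBlocks 0 (A i) (A i)ᵀ 0 := by
    have h2 : (√2)⁻¹ * (√2)⁻¹ = (2 : ℝ)⁻¹ := by rw [← mul_inv, Real.mul_self_sqrt zero_le_two]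
    rw [Bmat, minner_smul_left, symMat, minner_fromBlocks, minner_transpose, smul_smul]
    simp only [minner_zero_left, zero_add, add_zero]
    congr 1
    linear_combination (2 * minner (A i) T) * h2
  simp only [BstarB, hterm]
  ext (i | i) (j | j) <;> simp [AstarA, symMat, Matrix.sum_apply]

section Iterates

variable (A : Fin m → Matrix (Fin n₁) (Fin n₂) ℝ) (X : Matrix (Fin n₁) (Fin n₂) ℝ) (μ : ℝ)
  (V₀ : Matrix (Fin n₁) (Fin k) ℝ) (W₀ : Matrix (Fin n₂) (Fin k) ℝ) (t : ℕ)

def symResidual : Matrix (Fin n₁ ⊕ Fin n₂) (Fin n₁ ⊕ Fin n₂) ℝ :=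
  Zit A X μ V₀ W₀ t * (Zit A X μ V₀ W₀ t)ᵀ - Ztil A X μ V₀ W₀ t * (Ztil A X μ V₀ W₀ t)ᵀ
    - symMat X

lemma Δit_eq : Δit A X μ V₀ W₀ t
    = symResidual A X μ V₀ W₀ t - BstarB A (symResidual A X μ V₀ W₀ t) := rfl

lemma symResidual_eq : symResidual A X μ V₀ W₀ t
    = symMat ((iter A X μ V₀ W₀ t).1 * (iter A X μ V₀ W₀ t).2ᵀ - X) := by
  rw [symResidual, Zit, Ztil, Zstack_mul_transpose_sub_neg, symMat_sub]

lemma Zit_succ : Zit A X μ V₀ W₀ (t + 1)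
    = Zit A X μ V₀ W₀ t - μ • (BstarB A (symResidual A X μ V₀ W₀ t) * Zit A X μ V₀ W₀ t) := by
  rw [symResidual_eq, BstarB_symMat, Zit, Zit, symMat_mul_Zstack]
  ext (i | i) j <;> simp [Zstack, iter] <;> ring

lemma Ztil_succ : Ztil A X μ V₀ W₀ (t + 1)
    = Ztil A X μ V₀ W₀ t + μ • (BstarB A (symResidual A X μ V₀ W₀ t) * Ztil A X μ V₀ W₀ t) := by
  rw [symResidual_eq, BstarB_symMat, Ztil, Ztil, symMat_mul_Zstack]
  ext (i | i) j <;> simp [Zstack, iter] <;> ring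

lemma norm_Ztil : ‖Ztil A X μ V₀ W₀ t‖ = ‖Zit A X μ V₀ W₀ t‖ :=
  norm_eq_of_transpose_mul_self_eq (Zstack_neg_transpose_mul_self _ _)

lemma norm_symResidual_le :
    ‖symResidual A X μ V₀ W₀ t‖ ≤ 2 * ‖Zit A X μ V₀ W₀ t‖ ^ 2 + ‖X‖ := by
  calc ‖symResidual A X μ V₀ W₀ t‖
      ≤ ‖Zit A X μ V₀ W₀ t * (Zit A X μ V₀ W₀ t)ᵀ‖
        + ‖Ztil A X μ V₀ W₀ t * (Ztil A X μ V₀ W₀ t)ᵀ‖ + ‖symMat X‖ :=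
        (norm_sub_le _ _).trans (by gcongr; exact norm_sub_le _ _)
    _ ≤ 2 * ‖Zit A X μ V₀ W₀ t‖ ^ 2 + ‖X‖ := by
        rw [norm_mul_transpose_self, norm_mul_transpose_self, norm_Ztil]
        linarith [norm_symMat_le X]

lemma norm_BstarB_symResidual_le : ‖BstarB A (symResidual A X μ V₀ W₀ t)‖
    ≤ 2 * ‖Zit A X μ V₀ W₀ t‖ ^ 2 + ‖X‖ + ‖Δit A X μ V₀ W₀ t‖ := by
  rw [← sub_sub_cancel (symResidual A X μ V₀ W₀ t) (BstarB A _), ← Δit_eq]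
  linarith [norm_sub_le (symResidual A X μ V₀ W₀ t) (Δit A X μ V₀ W₀ t),
    norm_symResidual_le A X μ V₀ W₀ t]

end Iterates

theorem statement13_imbalance_growth_general
    {n₁ n₂ m k : ℕ}
    (A : Fin m → Matrix (Fin n₁) (Fin n₂) ℝ) (X : Matrix (Fin n₁) (Fin n₂) ℝ)
    (μ : ℝ)
    (V₀ : Matrix (Fin n₁) (Fin k) ℝ) (W₀ : Matrix (Fin n₂) (Fin k) ℝ)
    (Z Z' : ℕ → Matrix (Fin n₁ ⊕ Fin n₂) (Fin k) ℝ)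
    (Δ : ℕ → Matrix (Fin n₁ ⊕ Fin n₂) (Fin n₁ ⊕ Fin n₂) ℝ)
    (hZ : Z = Zit A X μ V₀ W₀) (hZ' : Z' = Ztil A X μ V₀ W₀) (hΔ : Δ = Δit A X μ V₀ W₀)
    (t : ℕ)
    (hZt : specNorm (Z t) ≤ 2 * Real.sqrt (specNorm X))
    (hΔt : specNorm (Δ t) ≤ specNorm X) :
    specNorm ((Z' (t + 1))ᵀ * Z (t + 1))
      ≤ specNorm ((Z' t)ᵀ * Z t) + 400 * μ ^ 2 * specNorm X ^ 3 := by
  subst hZ hZ' hΔ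
  simp only [specNorm_eq_norm] at hZt hΔt ⊢
  set S := BstarB A (symResidual A X μ V₀ W₀ t)
  have hZ_sq : ‖Zit A X μ V₀ W₀ t‖ ^ 2 ≤ 4 * ‖X‖ :=
    calc _ ≤ (2 * √‖X‖) ^ 2 := pow_le_pow_left₀ (norm_nonneg _) hZt 2
      _ = 4 * ‖X‖ := by rw [mul_pow, Real.sq_sqrt (norm_nonneg X)]; norm_num
  have hS : ‖S‖ ≤ 10 * ‖X‖ := by linarith [norm_BstarB_symResidual_le A X μ V₀ W₀ t]
  rw [Zit_succ, Ztil_succ, transpose_mul_eq_of_opposite_steps (BstarB_isSymm A _)]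
  calc _ ≤ ‖(Ztil A X μ V₀ W₀ t)ᵀ * Zit A X μ V₀ W₀ t‖
        + μ ^ 2 * (‖Zit A X μ V₀ W₀ t‖ ^ 2 * ‖S‖ ^ 2) := by
        grw [norm_sub_le, norm_smul, norm_pow, Real.norm_eq_abs, sq_abs,
          norm_transpose_mul_mul_mul_le, norm_Ztil, ← sq]
    _ ≤ ‖(Ztil A X μ V₀ W₀ t)ᵀ * Zit A X μ V₀ W₀ t‖ + μ ^ 2 * (4 * ‖X‖ * (10 * ‖X‖) ^ 2) := by
        gcongr
    _ = _ := by ring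

/-- growth of the imbalance matrix. -/
theorem statement13_imbalance_growth
    {n₁ n₂ m k r : ℕ}
    (A : Fin m → Matrix (Fin n₁) (Fin n₂) ℝ) (X : Matrix (Fin n₁) (Fin n₂) ℝ)
    (hrankX : X.rank = r)
    (μ : ℝ) (hμ : 0 < μ)
    (V₀ : Matrix (Fin n₁) (Fin k) ℝ) (W₀ : Matrix (Fin n₂) (Fin k) ℝ)
    (Z Z' : ℕ → Matrix (Fin n₁ ⊕ Fin n₂) (Fin k) ℝ)
    (Δ : ℕ → Matrix (Fin n₁ ⊕ Fin n₂) (Fin n₁ ⊕ Fin n₂) ℝ)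
    (hZ : Z = Zit A X μ V₀ W₀) (hZ' : Z' = Ztil A X μ V₀ W₀) (hΔ : Δ = Δit A X μ V₀ W₀)
    (t : ℕ)
    (hZt : specNorm (Z t) ≤ 2 * Real.sqrt (specNorm X))
    (hΔt : specNorm (Δ t) ≤ specNorm X) :
    specNorm ((Z' (t + 1))ᵀ * Z (t + 1))
      ≤ specNorm ((Z' t)ᵀ * Z t) + 400 * μ ^ 2 * specNorm X ^ 3 :=
  statement13_imbalance_growth_general A X μ V₀ W₀ Z Z' Δ hZ hZ' hΔ t hZt hΔt

end AsymMatrixSensing
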